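/- Let F = K_{1,3} with center a and leaves b, c, d, and for any positive integers s_1, s_2, s_3 let G be the graph obtained by replacing the edge ab by s_1 internally disjoint paths of length 2 from a to b, edge ac by s_2 such paths, and edge ad by s_3 such paths (an unbraced diamond inflation with no terminal edges); let H be the graph similarly obtained from K_3 on vertices u, v, w with edge uv inflated to width s_1, uw to width s_2, vw to width s_3. Then G and H are connected, nonisomorphic when (s_1,s_2,s_3) = (1,1,1) (giving SW and C_6), and in that case P_3(G) ≅ P_3(H). -/

import Mathlib

/-- A 3-vertex path (P₃) of a simple graph `G`: a middle vertex together with an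
unordered pair of distinct ends, each adjacent to the middle vertex.
This identifies the path `a-b-c` with `c-b-a`. -/
@[ext]
structure P3Path {V : Type*} (G : SimpleGraph V) where
  mid : V
  ends : Sym2 V
  not_diag : ¬ ends.IsDiag
  adj : ∀ x ∈ ends, G.Adj mid x

/-- The `P₃`-graph of `G`: two 3-vertex paths are adjacent iff their union is a
path on 4 vertices or a cycle on 3 vertices; equivalently, the middle vertex of
each is an end of the other. -/
def P3Graph {V : Type*} (G : SimpleGraph V) : SimpleGraph (P3Path G) where
  Adj p q := p ≠ q ∧ q.mid ∈ p.ends ∧ p.mid ∈ q.ends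
  symm := ⟨fun p q h => ⟨Ne.symm h.1, h.2.2, h.2.1⟩⟩
  loopless := ⟨fun p h => h.1 rfl⟩


/-- The diamond inflation of `K_{1,3}` (center `inl 0`, outer vertices
`inl 1, inl 2, inl 3`) in which the edge to `inl 1` is replaced by `s₁`
internally disjoint paths of length 2, similarly `s₂` and `s₃`. -/
def starInflation (s₁ s₂ s₃ : ℕ) :
    SimpleGraph ((Fin 4) ⊕ (Fin s₁ ⊕ Fin s₂ ⊕ Fin s₃)) :=
  SimpleGraph.fromRel fun x y =>
    ((x = Sum.inl 0 ∨ x = Sum.inl 1) ∧ ∃ i, y = Sum.inr (Sum.inl i)) ∨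
    ((x = Sum.inl 0 ∨ x = Sum.inl 2) ∧ ∃ i, y = Sum.inr (Sum.inr (Sum.inl i))) ∨
    ((x = Sum.inl 0 ∨ x = Sum.inl 3) ∧ ∃ i, y = Sum.inr (Sum.inr (Sum.inr i)))

/-- The diamond inflation of `K₃` (vertices `inl 0 = u`, `inl 1 = v`,
`inl 2 = w`) in which edge `uv` is replaced by `s₁` internally disjoint paths
of length 2, `uw` by `s₂`, and `vw` by `s₃`. -/
def triangleInflation (s₁ s₂ s₃ : ℕ) :
    SimpleGraph ((Fin 3) ⊕ (Fin s₁ ⊕ Fin s₂ ⊕ Fin s₃)) :=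
  SimpleGraph.fromRel fun x y =>
    ((x = Sum.inl 0 ∨ x = Sum.inl 1) ∧ ∃ i, y = Sum.inr (Sum.inl i)) ∨
    ((x = Sum.inl 0 ∨ x = Sum.inl 2) ∧ ∃ i, y = Sum.inr (Sum.inr (Sum.inl i))) ∨
    ((x = Sum.inl 1 ∨ x = Sum.inl 2) ∧ ∃ i, y = Sum.inr (Sum.inr (Sum.inr i)))


/-! Since every width is positive, each original vertex of `G` (resp. `H`) is joined to the
centre (resp. to `u`) through subdivision vertices, so both graphs are connected. For widths
`(1,1,1)`, `G` has seven vertices and `H = C₆` six. Every vertex of `C₆` has degree 2, so it is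
the middle of exactly one `P₃`, and two `P₃`s of `C₆` are adjacent iff their middles are; the six
`P₃`s of `G` likewise form a 6-cycle, alternating between the paths through one subdivision
vertex and the paths through two legs at the centre. -/

namespace P3Path

variable {V : Type*} {G : SimpleGraph V}

def equivSubtype : P3Path G ≃ {p : V × Sym2 V // ¬ p.2.IsDiag ∧ ∀ x ∈ p.2, G.Adj p.1 x} where
  toFun p := ⟨(p.mid, p.ends), p.not_diag, p.adj⟩
  invFun p := ⟨p.1.1, p.1.2, p.2.1, p.2.2⟩

instance [DecidableEq V] : DecidableEq (P3Path G) := equivSubtype.decidableEq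

instance [Fintype V] [DecidableEq V] [DecidableRel G.Adj] : Fintype (P3Path G) :=
  Fintype.ofEquiv _ equivSubtype.symm

end P3Path

instance {V : Type*} [DecidableEq V] {G : SimpleGraph V} : DecidableRel (P3Graph G).Adj :=
  fun p q => inferInstanceAs (Decidable (p ≠ q ∧ q.mid ∈ p.ends ∧ p.mid ∈ q.ends))

set_option synthInstance.maxSize 1000 in
instance (s₁ s₂ s₃ : ℕ) : DecidableRel (starInflation s₁ s₂ s₃).Adj := fun a b =>
  decidable_of_iff' _ (SimpleGraph.fromRel_adj _ a b)

set_option synthInstance.maxSize 1000 in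
instance (s₁ s₂ s₃ : ℕ) : DecidableRel (triangleInflation s₁ s₂ s₃).Adj := fun a b =>
  decidable_of_iff' _ (SimpleGraph.fromRel_adj _ a b)

lemma SimpleGraph.Adj.reachable_of_adj {V : Type*} {G : SimpleGraph V} {x y z : V}
    (hxy : G.Adj x y) (hyz : G.Adj y z) : G.Reachable x z :=
  hxy.reachable.trans hyz.reachable

section Connected

open SimpleGraph

variable {s₁ s₂ s₃ : ℕ}

lemma starInflation_connected (h₁ : 0 < s₁) (h₂ : 0 < s₂) (h₃ : 0 < s₃) :
    (starInflation s₁ s₂ s₃).Connected := by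
  refine (connected_iff_exists_forall_reachable _).2 ⟨.inl 0, ?_⟩
  rintro (j | i | i | i)
  · fin_cases j
    · rfl
    · exact Adj.reachable_of_adj (y := .inr (.inl ⟨0, h₁⟩))
        (by simp [starInflation]) (by simp [starInflation])
    · exact Adj.reachable_of_adj (y := .inr (.inr (.inl ⟨0, h₂⟩)))
        (by simp [starInflation]) (by simp [starInflation])
    · exact Adj.reachable_of_adj (y := .inr (.inr (.inr ⟨0, h₃⟩)))
        (by simp [starInflation]) (by simp [starInflation])
  all_goals exact Adj.reachable (by simp [starInflation])

lemma triangleInflation_connected (h₁ : 0 < s₁) (h₂ : 0 < s₂) :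
    (triangleInflation s₁ s₂ s₃).Connected := by
  have hv : (triangleInflation s₁ s₂ s₃).Reachable (.inl 0) (.inl 1) :=
    Adj.reachable_of_adj (y := .inr (.inl ⟨0, h₁⟩))
      (by simp [triangleInflation]) (by simp [triangleInflation])
  refine (connected_iff_exists_forall_reachable _).2 ⟨.inl 0, ?_⟩
  rintro (j | i | i | i)
  · fin_cases j
    · rfl
    · exact hv
    · exact Adj.reachable_of_adj (y := .inr (.inr (.inl ⟨0, h₂⟩)))
        (by simp [triangleInflation]) (by simp [triangleInflation])
  · exact Adj.reachable (by simp [triangleInflation])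
  · exact Adj.reachable (by simp [triangleInflation])
  · exact hv.trans (Adj.reachable (by simp [triangleInflation]))

end Connected

lemma not_nonempty_starInflation_iso_triangleInflation (s₁ s₂ s₃ : ℕ) :
    ¬ Nonempty (starInflation s₁ s₂ s₃ ≃g triangleInflation s₁ s₂ s₃) := fun ⟨e⟩ => by
  simpa using Fintype.card_congr e.toEquiv

/-- Corner `k` of `K₃` goes to the path through the `k`-th subdivision vertex of the star, and the
subdivision vertex of the edge between corners `i` and `j` to the path at the centre through the
`i`-th and `j`-th legs. -/
def starPathAt : (Fin 3) ⊕ (Fin 1 ⊕ Fin 1 ⊕ Fin 1) → P3Path (starInflation 1 1 1)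
  | .inl 0 => ⟨.inr (.inl 0), s(.inl 0, .inl 1), by decide, by decide⟩
  | .inl 1 => ⟨.inr (.inr (.inl 0)), s(.inl 0, .inl 2), by decide, by decide⟩
  | .inl 2 => ⟨.inr (.inr (.inr 0)), s(.inl 0, .inl 3), by decide, by decide⟩
  | .inr (.inl _) => ⟨.inl 0, s(.inr (.inl 0), .inr (.inr (.inl 0))), by decide, by decide⟩
  | .inr (.inr (.inl _)) => ⟨.inl 0, s(.inr (.inl 0), .inr (.inr (.inr 0))), by decide, by decide⟩
  | .inr (.inr (.inr _)) =>
    ⟨.inl 0, s(.inr (.inr (.inl 0)), .inr (.inr (.inr 0))), by decide, by decide⟩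

lemma starPathAt_mid_bijective :
    Function.Bijective fun q : P3Path (triangleInflation 1 1 1) => starPathAt q.mid := by
  decide

set_option synthInstance.maxSize 1000 in
lemma starPathAt_mid_adj_iff : ∀ p q : P3Path (triangleInflation 1 1 1),
    (P3Graph (starInflation 1 1 1)).Adj (starPathAt p.mid) (starPathAt q.mid) ↔
      (P3Graph (triangleInflation 1 1 1)).Adj p q := by
  decide

noncomputable def p3GraphTriangleIsoStar :
    P3Graph (triangleInflation 1 1 1) ≃g P3Graph (starInflation 1 1 1) where
  toEquiv := Equiv.ofBijective _ starPathAt_mid_bijective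
  map_rel_iff' := starPathAt_mid_adj_iff _ _

/-- The diamond inflations `G` of `K_{1,3}` and `H` of `K₃` (widths
`s₁, s₂, s₃ ≥ 1`, no terminal edges) are connected; when
`(s₁,s₂,s₃) = (1,1,1)` (giving `SW` and `C₆`) they are nonisomorphic and have
isomorphic `P₃`-graphs. -/
theorem star_triangle_inflation (s₁ s₂ s₃ : ℕ)
    (h₁ : 0 < s₁) (h₂ : 0 < s₂) (h₃ : 0 < s₃) :
    (starInflation s₁ s₂ s₃).Connected ∧
    (triangleInflation s₁ s₂ s₃).Connected ∧
    (s₁ = 1 ∧ s₂ = 1 ∧ s₃ = 1 →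
      ¬ Nonempty (starInflation s₁ s₂ s₃ ≃g triangleInflation s₁ s₂ s₃) ∧
      Nonempty (P3Graph (starInflation s₁ s₂ s₃) ≃g
        P3Graph (triangleInflation s₁ s₂ s₃))) := by
  refine ⟨starInflation_connected h₁ h₂ h₃, triangleInflation_connected h₁ h₂, ?_⟩
  rintro ⟨rfl, rfl, rfl⟩
  exact ⟨not_nonempty_starInflation_iso_triangleInflation 1 1 1, ⟨p3GraphTriangleIsoStar.symm⟩⟩
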